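/- arXiv:2101.02474 — 3 statements merged into one kernel-verified Lean document; each statement's English description precedes it below -/
import Mathlib

section
/- The second sum rule for the full Lorentz profile: ∫₀^∞ f_FL(ν)/ν² dν = 1/ν₀², for γ > 0 and ν₀ > 0, where f_FL(ν) = (4/π)·γν²/((ν₀²−ν²)² + 4γ²ν²). -/
/-!
For `ν > 0` the denominator factors as `ν² ((ν - ν₀²/ν)² + (2γ)²)`, so the integrand is
`4γ/(π ν₀²) · (ν₀²/ν²) g(ν - ν₀²/ν)` with the even function `g u = ((2γ)² + u²)⁻¹`.
The inversion `ν ↦ ν₀²/ν` turns `ν - ν₀²/ν` into its negative and trades the weight `ν₀²/ν²`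
for `1`, so both halves of `∫₀^∞ (1 + ν₀²/ν²) g(ν - ν₀²/ν) dν` are equal; and this integral is
`∫_ℝ g = π/(2γ)`, because `ν ↦ ν - ν₀²/ν` is an increasing bijection of `(0, ∞)` onto `ℝ`
with derivative `1 + ν₀²/ν²`.
-/

open MeasureTheory Real Set

section Substitution

variable {E : Type*} [NormedAddCommGroup E] [NormedSpace ℝ E] {c : ℝ}

lemma hasDerivAt_const_div (c : ℝ) {x : ℝ} (hx : x ≠ 0) :
    HasDerivAt (fun x => c / x) (-(c / x ^ 2)) x := by
  simpa [div_eq_mul_inv] using (hasDerivAt_inv hx).const_mul c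

lemma hasDerivAt_sub_const_div (c : ℝ) {x : ℝ} (hx : x ≠ 0) :
    HasDerivAt (fun x => x - c / x) (1 + c / x ^ 2) x :=
  ((hasDerivAt_id' x).sub (hasDerivAt_const_div c hx)).congr_deriv (sub_neg_eq_add 1 _)

lemma antitoneOn_const_div (hc : 0 ≤ c) : AntitoneOn (fun x : ℝ => c / x) (Ioi 0) :=
  fun _ hx _ _ hxy => div_le_div_of_nonneg_left hc hx hxy

lemma monotoneOn_sub_const_div (hc : 0 ≤ c) : MonotoneOn (fun x : ℝ => x - c / x) (Ioi 0) :=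
  fun _ hx _ hy hxy => sub_le_sub hxy (antitoneOn_const_div hc hx hy hxy)

lemma image_const_div_Ioi (hc : 0 < c) : (fun x : ℝ => c / x) '' Ioi 0 = Ioi 0 := by
  refine (image_subset_iff.2 fun x hx => div_pos hc hx).antisymm fun y hy => ?_
  exact ⟨c / y, div_pos hc hy, div_div_cancel₀ hc.ne'⟩

lemma image_sub_const_div_Ioi (hc : 0 < c) : (fun x : ℝ => x - c / x) '' Ioi 0 = univ := by
  refine eq_univ_of_forall fun u => ?_
  set r := √(u ^ 2 + 4 * c)
  have hr : r ^ 2 = u ^ 2 + 4 * c := sq_sqrt (by positivity)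
  have hu : |u| < r := by
    rw [← sqrt_sq_eq_abs]; exact sqrt_lt_sqrt (sq_nonneg u) (by linarith)
  have hx : 0 < u + r := by linarith [neg_abs_le u]
  refine ⟨(u + r) / 2, half_pos hx, ?_⟩
  field_simp
  linear_combination hr

theorem integral_Ioi_div_sq_smul_comp_const_div (hc : 0 < c) (g : ℝ → E) :
    ∫ x in Ioi 0, (c / x ^ 2) • g (c / x) = ∫ x in Ioi 0, g x := by
  have := integral_image_eq_integral_deriv_smul_of_antitoneOn measurableSet_Ioi
    (fun x hx => (hasDerivAt_const_div c (ne_of_gt hx)).hasDerivWithinAt)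
    (antitoneOn_const_div hc.le) g
  simpa only [image_const_div_Ioi hc, neg_neg, eq_comm] using this

theorem integral_Ioi_one_add_div_sq_smul_comp_sub_const_div (hc : 0 < c) (g : ℝ → E) :
    ∫ x in Ioi 0, (1 + c / x ^ 2) • g (x - c / x) = ∫ u, g u := by
  have := integral_image_eq_integral_deriv_smul_of_monotoneOn measurableSet_Ioi
    (fun x hx => (hasDerivAt_sub_const_div c (ne_of_gt hx)).hasDerivWithinAt)
    (monotoneOn_sub_const_div hc.le) g
  rwa [image_sub_const_div_Ioi hc, setIntegral_univ, eq_comm] at this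

theorem integrableOn_Ioi_one_add_div_sq_smul_comp_sub_const_div (hc : 0 < c) {g : ℝ → E}
    (hg : Integrable g) :
    IntegrableOn (fun x => (1 + c / x ^ 2) • g (x - c / x)) (Ioi 0) := by
  rw [← integrableOn_image_iff_integrableOn_deriv_smul_of_monotoneOn measurableSet_Ioi
    (fun x hx => (hasDerivAt_sub_const_div c (ne_of_gt hx)).hasDerivWithinAt)
    (monotoneOn_sub_const_div hc.le), image_sub_const_div_Ioi hc, integrableOn_univ]
  exact hg

theorem integral_Ioi_div_sq_smul_comp_sub_const_div_of_even (hc : 0 < c) {g : ℝ → E}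
    (hg : Integrable g) (hg_even : ∀ u, g (-u) = g u) :
    ∫ x in Ioi 0, (c / x ^ 2) • g (x - c / x) = (1 / 2 : ℝ) • ∫ u, g u := by
  have h_inv : ∫ x in Ioi 0, (c / x ^ 2) • g (x - c / x) = ∫ x in Ioi 0, g (x - c / x) := by
    convert integral_Ioi_div_sq_smul_comp_const_div hc (fun x => g (x - c / x)) using 4 with x
    rw [← hg_even, div_div_cancel₀ hc.ne', neg_sub]
  have hint_sum := integrableOn_Ioi_one_add_div_sq_smul_comp_sub_const_div hc hg
  have hint_right : IntegrableOn (fun x => (c / x ^ 2) • g (x - c / x)) (Ioi 0) := by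
    refine IntegrableOn.congr_fun (hint_sum.bdd_smul 1 (φ := fun x => c / (x ^ 2 + c))
      (by fun_prop : Measurable _).aestronglyMeasurable ?_) (fun x (hx : 0 < x) => ?_)
      measurableSet_Ioi
    · refine ae_of_all _ fun x => ?_
      rw [norm_div, Real.norm_of_nonneg hc.le, Real.norm_of_nonneg (by positivity)]
      exact div_le_one_of_le₀ (le_add_of_nonneg_left (sq_nonneg x)) (by positivity)
    · simp only [Pi.smul_apply', smul_smul]
      congr 1
      field_simp
  have hint_left : IntegrableOn (fun x => g (x - c / x)) (Ioi 0) :=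
    (hint_sum.sub hint_right).congr_fun (fun x _ => by simp [add_smul]) measurableSet_Ioi
  have h_sum : ∫ u, g u = (∫ x in Ioi 0, (c / x ^ 2) • g (x - c / x)) +
      ∫ x in Ioi 0, (c / x ^ 2) • g (x - c / x) := by
    rw [← integral_Ioi_one_add_div_sq_smul_comp_sub_const_div hc]
    simp only [add_smul, one_smul]
    rw [integral_add hint_left hint_right, h_inv]
  rw [h_sum, ← two_smul ℝ, smul_smul]
  norm_num

end Substitution

theorem integrable_inv_sq_add_sq {a : ℝ} (ha : a ≠ 0) :
    Integrable fun x : ℝ => (a ^ 2 + x ^ 2)⁻¹ := by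
  refine ((integrable_inv_one_add_sq.comp_div ha).const_mul (a ^ 2)⁻¹).congr
    (ae_of_all _ fun x => ?_)
  field_simp

theorem integral_univ_inv_sq_add_sq {a : ℝ} (ha : a ≠ 0) :
    ∫ x : ℝ, (a ^ 2 + x ^ 2)⁻¹ = π / |a| := by
  have h : ∀ x : ℝ, (a ^ 2 + x ^ 2)⁻¹ = (a ^ 2)⁻¹ * (1 + (x / a) ^ 2)⁻¹ := fun x => by
    field_simp
  simp_rw [h, integral_const_mul, Measure.integral_comp_div (fun x => (1 + x ^ 2)⁻¹) a,
    integral_univ_inv_one_add_sq, smul_eq_mul]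
  rw [← sq_abs a]
  field_simp

theorem full_lorentz_second_sum_rule (γ ν₀ : ℝ) (hγ : 0 < γ) (hν₀ : 0 < ν₀) :
    ∫ ν in Set.Ioi (0 : ℝ),
      ((4 / Real.pi) * (γ * ν ^ 2) / ((ν₀ ^ 2 - ν ^ 2) ^ 2 + 4 * γ ^ 2 * ν ^ 2)) / ν ^ 2
      = 1 / ν₀ ^ 2 := by
  have hc : 0 < ν₀ ^ 2 := by positivity
  have h2γ : 0 < 2 * γ := by positivity
  have key := integral_Ioi_div_sq_smul_comp_sub_const_div_of_even hc
    (integrable_inv_sq_add_sq h2γ.ne') (fun u => by rw [neg_sq])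
  rw [integral_univ_inv_sq_add_sq h2γ.ne', abs_of_pos h2γ] at key
  simp only [smul_eq_mul] at key
  calc _ = ∫ ν in Ioi 0, 4 * γ / (π * ν₀ ^ 2) *
        (ν₀ ^ 2 / ν ^ 2 * ((2 * γ) ^ 2 + (ν - ν₀ ^ 2 / ν) ^ 2)⁻¹) := by
        refine setIntegral_congr_fun measurableSet_Ioi fun ν (hν : 0 < ν) => ?_
        field_simp
        ring
    _ = 1 / ν₀ ^ 2 := by
        rw [integral_const_mul, key]
        field_simp
        norm_num
end

section
/- The normalized Voigt relative error converges to zero uniformly in ν̃ ∈ ℝ as γ̃ → ∞: for every ε > 0 there exists Γ > 0 such that for all γ̃ > Γ and all ν̃ ∈ ℝ, |(1/√π)·∫_{−∞}^{∞} e^{−t²}·t(2ν̃−t)/(γ̃²+(ν̃−t)²) dt| < ε. -/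
/-! Writing `t (2ν - t) = 2 t (ν - t) + t²` and using `2γ|ν - t| ≤ γ² + (ν - t)²`, the integrand
is bounded by `e^{-t²} (|t| / γ + t² / γ²)` independently of `ν`, so the error is `O(1/γ)`
uniformly in `ν`. -/

open MeasureTheory Filter Topology

lemma abs_mul_two_mul_sub_div_le {γ : ℝ} (hγ : 0 < γ) (ν t : ℝ) :
    |t * (2 * ν - t) / (γ ^ 2 + (ν - t) ^ 2)| ≤ |t| / γ + t ^ 2 / γ ^ 2 := by
  have hD : 0 < γ ^ 2 + (ν - t) ^ 2 := by positivity
  have hAMGM : 2 * γ * |ν - t| ≤ γ ^ 2 + (ν - t) ^ 2 := by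
    nlinarith [sq_nonneg (γ - |ν - t|), sq_abs (ν - t)]
  have hcross : 2 * |t| * |ν - t| / (γ ^ 2 + (ν - t) ^ 2) ≤ |t| / γ := by
    rw [div_le_div_iff₀ hD hγ]
    nlinarith [mul_le_mul_of_nonneg_left hAMGM (abs_nonneg t)]
  have hsquare : t ^ 2 / (γ ^ 2 + (ν - t) ^ 2) ≤ t ^ 2 / γ ^ 2 :=
    div_le_div_of_nonneg_left (sq_nonneg t) (by positivity) (by nlinarith [sq_nonneg (ν - t)])
  calc |t * (2 * ν - t) / (γ ^ 2 + (ν - t) ^ 2)|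
      = |2 * t * (ν - t) + t ^ 2| / (γ ^ 2 + (ν - t) ^ 2) := by
        rw [abs_div, abs_of_pos hD]; ring_nf
    _ ≤ (2 * |t| * |ν - t| + t ^ 2) / (γ ^ 2 + (ν - t) ^ 2) := by
        gcongr
        calc |2 * t * (ν - t) + t ^ 2| ≤ |2 * t * (ν - t)| + |t ^ 2| := abs_add_le _ _
          _ = 2 * |t| * |ν - t| + t ^ 2 := by simp [abs_mul]
    _ ≤ |t| / γ + t ^ 2 / γ ^ 2 := by rw [add_div]; exact add_le_add hcross hsquare

lemma integrable_abs_mul_exp_neg_sq : Integrable fun t : ℝ => |t| * Real.exp (-t ^ 2) := by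
  refine (integrable_mul_exp_neg_mul_sq one_pos).abs.congr (.of_forall fun t => ?_)
  simp [abs_mul]

lemma integrable_sq_mul_exp_neg_sq : Integrable fun t : ℝ => t ^ 2 * Real.exp (-t ^ 2) := by
  refine (integrable_rpow_mul_exp_neg_mul_sq one_pos (s := 2) (by norm_num)).congr
    (.of_forall fun t => ?_)
  simp

lemma abs_integral_exp_neg_sq_mul_le {γ : ℝ} (hγ : 0 < γ) (ν : ℝ) :
    |∫ t : ℝ, Real.exp (-t ^ 2) * (t * (2 * ν - t) / (γ ^ 2 + (ν - t) ^ 2))| ≤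
      (∫ t : ℝ, |t| * Real.exp (-t ^ 2)) / γ +
        (∫ t : ℝ, t ^ 2 * Real.exp (-t ^ 2)) / γ ^ 2 := by
  have hint₁ := integrable_abs_mul_exp_neg_sq.div_const γ
  have hint₂ := integrable_sq_mul_exp_neg_sq.div_const (γ ^ 2)
  calc |∫ t : ℝ, Real.exp (-t ^ 2) * (t * (2 * ν - t) / (γ ^ 2 + (ν - t) ^ 2))|
      ≤ ∫ t : ℝ, (|t| * Real.exp (-t ^ 2) / γ + t ^ 2 * Real.exp (-t ^ 2) / γ ^ 2) := by
        rw [← Real.norm_eq_abs]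
        refine norm_integral_le_of_norm_le (hint₁.add hint₂) (.of_forall fun t => ?_)
        rw [norm_mul, Real.norm_of_nonneg (Real.exp_pos _).le, Real.norm_eq_abs]
        calc Real.exp (-t ^ 2) * |t * (2 * ν - t) / (γ ^ 2 + (ν - t) ^ 2)|
            ≤ Real.exp (-t ^ 2) * (|t| / γ + t ^ 2 / γ ^ 2) := by
              gcongr; exact abs_mul_two_mul_sub_div_le hγ ν t
          _ = |t| * Real.exp (-t ^ 2) / γ + t ^ 2 * Real.exp (-t ^ 2) / γ ^ 2 := by ring
    _ = _ := by rw [integral_add hint₁ hint₂, integral_div, integral_div]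

theorem voigt_error_uniform_convergence :
    ∀ ε > 0, ∃ Γ > 0, ∀ γ' > Γ, ∀ ν' : ℝ,
      |(1 / Real.sqrt Real.pi) * ∫ t : ℝ, Real.exp (-t ^ 2) *
          (t * (2 * ν' - t) / (γ' ^ 2 + (ν' - t) ^ 2))| < ε := by
  intro ε hε
  set M₁ := ∫ t : ℝ, |t| * Real.exp (-t ^ 2)
  set M₂ := ∫ t : ℝ, t ^ 2 * Real.exp (-t ^ 2)
  have hbound :
      Tendsto (fun γ : ℝ => 1 / Real.sqrt Real.pi * (M₁ / γ + M₂ / γ ^ 2)) atTop (𝓝 0) := by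
    have h := ((tendsto_inv_atTop_zero.const_mul M₁).add
      ((tendsto_inv_atTop_zero.pow 2).const_mul M₂)).const_mul (1 / Real.sqrt Real.pi)
    simpa [div_eq_mul_inv, inv_pow] using h
  obtain ⟨N, hN⟩ := eventually_atTop.mp (hbound.eventually (gt_mem_nhds hε))
  refine ⟨max N 1, by positivity, fun γ hγ ν => ?_⟩
  have hγ₀ : 0 < γ := by linarith [le_max_right N 1]
  calc |1 / Real.sqrt Real.pi * ∫ t : ℝ, Real.exp (-t ^ 2) *
          (t * (2 * ν - t) / (γ ^ 2 + (ν - t) ^ 2))|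
      ≤ 1 / Real.sqrt Real.pi * (M₁ / γ + M₂ / γ ^ 2) := by
        rw [abs_mul, abs_of_nonneg (by positivity)]
        gcongr
        exact abs_integral_exp_neg_sq_mul_le hγ₀ ν
    _ < ε := hN γ (le_of_max_le_left hγ.le)
end

section
/- For the full Voigt profile f_FV = f_G ∗ f_FL (convolution of the Gaussian with the full Lorentz profile), one has f_FV(ν) = Im{h_FV(ν)}, where h_FV(ν) = √(ln2/π)·(1/α)·[(−γ/a + i)·w((ν+a+iγ)√(ln2)/α) + (γ/a + i)·w((ν−a+iγ)√(ln2)/α)], with a = √(ν₀² − γ²), provided ν₀ > γ > 0 and α > 0, and w the Faddeeva function. -/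
/-! The full Lorentz profile is the imaginary part of `(2/π) s / (ν₀² - s² - 2iγs)`, whose
denominator factors as `-(s - a + iγ)(s + a + iγ)` because `ν₀² = a² + γ²`. Splitting it into
partial fractions, the convolution with the Gaussian `e^{-c²t²}`, `c = √(ln 2)/α`, becomes a sum
of two Cauchy transforms `∫ e^{-c²t²} / (ζ - t) dt` with `Im ζ = γ > 0`; the substitution `u = ct`
turns each into the integral representation of `w(cζ)`. The imaginary part commutes with the
integral since the Gaussian makes everything absolutely integrable. -/

open MeasureTheory Complex

/-- The Faddeeva function for `Im z > 0`, via its integral representation. -/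
noncomputable def faddeeva (z : ℂ) : ℂ :=
  (I / Real.pi) * ∫ t : ℝ, Complex.exp (-(t : ℂ) ^ 2) / (z - (t : ℂ))

lemma integrable_cexp_neg_sq_div_sub {z : ℂ} (hz : z.im ≠ 0) :
    Integrable fun u : ℝ => cexp (-(u : ℂ) ^ 2) / (z - u) := by
  have hcont : Continuous fun u : ℝ => cexp (-(u : ℂ) ^ 2) / (z - u) :=
    Continuous.div (by fun_prop) (by fun_prop) fun u h => hz (by simpa using congrArg im h)
  refine ((integrable_exp_neg_mul_sq one_pos).div_const |z.im|).mono'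
    hcont.aestronglyMeasurable (Filter.Eventually.of_forall fun u => ?_)
  rw [norm_div, Complex.norm_exp]
  have hre : (-(u : ℂ) ^ 2).re = -1 * u ^ 2 := by norm_cast; simp
  rw [hre]
  exact div_le_div_of_nonneg_left (Real.exp_nonneg _) (abs_pos.mpr hz)
    (by simpa using Complex.abs_im_le_norm (z - u))

lemma cexp_neg_mul_sq_div_sub_eq {c : ℝ} (hc : c ≠ 0) (ζ : ℂ) (t : ℝ) :
    cexp (-((c * t : ℝ) : ℂ) ^ 2) / (ζ - t) =
      c * (cexp (-((c * t : ℝ) : ℂ) ^ 2) / (ζ * c - (c * t : ℝ))) := by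
  have hc' : (c : ℂ) ≠ 0 := Complex.ofReal_ne_zero.mpr hc
  rw [Complex.ofReal_mul, show ζ * c - c * t = c * (ζ - t) by ring, ← mul_div_assoc,
    mul_div_mul_left _ _ hc']

lemma integrable_cexp_neg_mul_sq_div_sub {c : ℝ} (hc : c ≠ 0) {ζ : ℂ} (hζ : ζ.im ≠ 0) :
    Integrable fun t : ℝ => cexp (-((c * t : ℝ) : ℂ) ^ 2) / (ζ - t) := by
  simp_rw [cexp_neg_mul_sq_div_sub_eq hc]
  refine ((integrable_cexp_neg_sq_div_sub ?_).comp_mul_left' hc).const_mul _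
  simpa [hc] using hζ

lemma integral_cexp_neg_mul_sq_div_sub {c : ℝ} (hc : 0 < c) (ζ : ℂ) :
    ∫ t : ℝ, cexp (-((c * t : ℝ) : ℂ) ^ 2) / (ζ - t) =
      ∫ u : ℝ, cexp (-(u : ℂ) ^ 2) / (ζ * c - u) := by
  simp_rw [cexp_neg_mul_sq_div_sub_eq hc.ne', integral_const_mul,
    Measure.integral_comp_mul_left (fun u : ℝ => cexp (-(u : ℂ) ^ 2) / (ζ * c - u)),
    abs_of_pos (inv_pos.mpr hc), Complex.real_smul, ← mul_assoc, ← Complex.ofReal_mul,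
    mul_inv_cancel₀ hc.ne', Complex.ofReal_one, one_mul]

lemma faddeeva_mul_ofReal {c : ℝ} (hc : 0 < c) (ζ : ℂ) :
    faddeeva (ζ * c) = I / Real.pi * ∫ t : ℝ, cexp (-((c * t : ℝ) : ℂ) ^ 2) / (ζ - t) := by
  rw [integral_cexp_neg_mul_sq_div_sub hc, faddeeva]

noncomputable def complexFullLorentz (ν₀ γ s : ℝ) : ℂ :=
  2 / Real.pi * s / (ν₀ ^ 2 - s ^ 2 - 2 * I * γ * s)

lemma complexFullLorentz_im (ν₀ γ s : ℝ) :
    (complexFullLorentz ν₀ γ s).im =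
      (4 / Real.pi) * (γ * s ^ 2) / ((ν₀ ^ 2 - s ^ 2) ^ 2 + 4 * γ ^ 2 * s ^ 2) := by
  simp only [complexFullLorentz, pow_two, div_im, mul_im, div_ofReal_re, re_ofNat, ofReal_im,
    mul_zero, im_ofNat, ofReal_re, zero_mul, normSq_apply, add_zero, zero_div, sub_self, sub_re,
    mul_re, sub_zero, I_re, I_im, mul_one, zero_add, sub_im, zero_sub, mul_neg, neg_mul, neg_neg]
  ring

lemma complexFullLorentz_eq_add_partialFractions {ν₀ γ a : ℝ} (hγ : γ ≠ 0) (ha : a ≠ 0)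
    (h : ν₀ ^ 2 = a ^ 2 + γ ^ 2) (s : ℝ) :
    complexFullLorentz ν₀ γ s = 1 / Real.pi *
      ((-1 + I * γ / a) / (s - a + I * γ) + (-1 - I * γ / a) / (s + a + I * γ)) := by
  have h₁ : (s : ℂ) - a + I * γ ≠ 0 := fun h => hγ (by simpa using congrArg Complex.im h)
  have h₂ : (s : ℂ) + a + I * γ ≠ 0 := fun h => hγ (by simpa using congrArg Complex.im h)
  have hfac : (ν₀ : ℂ) ^ 2 - s ^ 2 - 2 * I * γ * s = -((s - a + I * γ) * (s + a + I * γ)) := by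
    have : (ν₀ : ℂ) ^ 2 = a ^ 2 + γ ^ 2 := by exact_mod_cast h
    linear_combination this + γ ^ 2 * I_sq
  have hπ : (Real.pi : ℂ) ≠ 0 := Complex.ofReal_ne_zero.mpr Real.pi_ne_zero
  have ha' : (a : ℂ) ≠ 0 := Complex.ofReal_ne_zero.mpr ha
  rw [complexFullLorentz, hfac]
  field_simp
  ring

lemma ofReal_exp_neg_sq_mul_div_sq {b : ℝ} (hb : 0 ≤ b) (α t : ℝ) :
    ((Real.exp (-t ^ 2 * b / α ^ 2) : ℝ) : ℂ) = cexp (-((Real.sqrt b / α * t : ℝ) : ℂ) ^ 2) := by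
  rw [Complex.ofReal_exp, ← Complex.ofReal_pow, ← Complex.ofReal_neg, mul_pow, div_pow,
    Real.sq_sqrt hb]
  ring_nf

section Voigt

variable {ν₀ γ a c : ℝ} (hγ : γ ≠ 0) (ha : a ≠ 0) (hν₀ : ν₀ ^ 2 = a ^ 2 + γ ^ 2)
include hγ ha hν₀

lemma cexp_neg_mul_sq_mul_complexFullLorentz_sub (ν t : ℝ) :
    cexp (-((c * t : ℝ) : ℂ) ^ 2) * complexFullLorentz ν₀ γ (ν - t) = 1 / Real.pi *
      ((-1 + I * γ / a) * (cexp (-((c * t : ℝ) : ℂ) ^ 2) / (((ν - a : ℝ) : ℂ) + I * γ - t)) +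
        (-1 - I * γ / a) * (cexp (-((c * t : ℝ) : ℂ) ^ 2) / (((ν + a : ℝ) : ℂ) + I * γ - t))) := by
  rw [complexFullLorentz_eq_add_partialFractions hγ ha hν₀]
  push_cast
  ring

lemma integrable_cexp_neg_mul_sq_mul_complexFullLorentz_sub (hc : c ≠ 0) (ν : ℝ) :
    Integrable fun t : ℝ => cexp (-((c * t : ℝ) : ℂ) ^ 2) * complexFullLorentz ν₀ γ (ν - t) := by
  simp_rw [cexp_neg_mul_sq_mul_complexFullLorentz_sub hγ ha hν₀]
  refine (((integrable_cexp_neg_mul_sq_div_sub hc ?_).const_mul _).add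
    ((integrable_cexp_neg_mul_sq_div_sub hc ?_).const_mul _)).const_mul _ <;> simpa using hγ

lemma integral_cexp_neg_mul_sq_mul_complexFullLorentz_sub (hc : 0 < c) (ν : ℝ) :
    ∫ t : ℝ, cexp (-((c * t : ℝ) : ℂ) ^ 2) * complexFullLorentz ν₀ γ (ν - t) =
      ((-(γ / a) : ℝ) + I) * faddeeva ((((ν + a : ℝ) : ℂ) + I * γ) * c) +
        (((γ / a : ℝ) : ℂ) + I) * faddeeva ((((ν - a : ℝ) : ℂ) + I * γ) * c) := by
  have him : ∀ b : ℝ, ((b : ℂ) + I * γ).im ≠ 0 := fun b => by simpa using hγ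
  simp_rw [cexp_neg_mul_sq_mul_complexFullLorentz_sub hγ ha hν₀]
  rw [integral_const_mul, integral_add
      ((integrable_cexp_neg_mul_sq_div_sub hc.ne' (him _)).const_mul _)
      ((integrable_cexp_neg_mul_sq_div_sub hc.ne' (him _)).const_mul _),
    integral_const_mul, integral_const_mul, faddeeva_mul_ofReal hc, faddeeva_mul_ofReal hc]
  generalize (∫ t : ℝ, cexp (-((c * t : ℝ) : ℂ) ^ 2) / (((ν - a : ℝ) : ℂ) + I * γ - t)) = Jm
  generalize (∫ t : ℝ, cexp (-((c * t : ℝ) : ℂ) ^ 2) / (((ν + a : ℝ) : ℂ) + I * γ - t)) = Jp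
  have hπ : (Real.pi : ℂ) ≠ 0 := Complex.ofReal_ne_zero.mpr Real.pi_ne_zero
  push_cast
  field_simp
  linear_combination -(Jm + Jp) * I_sq

end Voigt

theorem full_voigt_via_faddeeva (α γ ν₀ : ℝ) (hα : 0 < α) (hγ : 0 < γ) (hν₀ : γ < ν₀) (ν : ℝ) :
    let fG : ℝ → ℝ := fun t => Real.sqrt (Real.log 2 / Real.pi) * (1 / α) *
      Real.exp (-t ^ 2 * Real.log 2 / α ^ 2)
    let fFL : ℝ → ℝ := fun s =>
      (4 / Real.pi) * (γ * s ^ 2) / ((ν₀ ^ 2 - s ^ 2) ^ 2 + 4 * γ ^ 2 * s ^ 2)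
    let fFV : ℝ → ℝ := fun ν => ∫ t : ℝ, fG t * fFL (ν - t)
    let a : ℝ := Real.sqrt (ν₀ ^ 2 - γ ^ 2)
    let hFV : ℂ :=
      ((Real.sqrt (Real.log 2 / Real.pi) * (1 / α) : ℝ) : ℂ) *
        (((-(γ / a) : ℝ) + I) *
            faddeeva ((((ν + a : ℝ) : ℂ) + I * (γ : ℂ)) * ((Real.sqrt (Real.log 2) / α : ℝ) : ℂ))
          + (((γ / a : ℝ) : ℂ) + I) *
            faddeeva ((((ν - a : ℝ) : ℂ) + I * (γ : ℂ)) * ((Real.sqrt (Real.log 2) / α : ℝ) : ℂ)))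
    fFV ν = hFV.im := by
  intro fG fFL fFV a hFV
  have hν₀a : ν₀ ^ 2 = a ^ 2 + γ ^ 2 := by
    rw [Real.sq_sqrt (by nlinarith)]; ring
  have ha : a ≠ 0 := (Real.sqrt_pos.mpr (by nlinarith)).ne'
  have hc : 0 < Real.sqrt (Real.log 2) / α :=
    div_pos (Real.sqrt_pos.mpr (Real.log_pos one_lt_two)) hα
  have hfG : ∀ t : ℝ, (fG t : ℂ) = (Real.sqrt (Real.log 2 / Real.pi) * (1 / α) : ℝ) *
      cexp (-((Real.sqrt (Real.log 2) / α * t : ℝ) : ℂ) ^ 2) := fun t =>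
    (Complex.ofReal_mul _ _).trans
      (congrArg _ (ofReal_exp_neg_sq_mul_div_sq (Real.log_nonneg one_le_two) α t))
  have hint : Integrable fun t : ℝ => (fG t : ℂ) * complexFullLorentz ν₀ γ (ν - t) := by
    simp_rw [hfG, mul_assoc]
    exact
      (integrable_cexp_neg_mul_sq_mul_complexFullLorentz_sub hγ.ne' ha hν₀a hc.ne' ν).const_mul _
  calc fFV ν = ∫ t : ℝ, ((fG t : ℂ) * complexFullLorentz ν₀ γ (ν - t)).im := by
        simp only [fFV, fFL, Complex.im_ofReal_mul, complexFullLorentz_im]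
    _ = (∫ t : ℝ, (fG t : ℂ) * complexFullLorentz ν₀ γ (ν - t)).im := integral_im hint
    _ = hFV.im := by
        simp_rw [hfG, mul_assoc, integral_const_mul,
          integral_cexp_neg_mul_sq_mul_complexFullLorentz_sub hγ.ne' ha hν₀a hc ν]
        rfl
end
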